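/- arXiv:1112.2554 — 3 statements merged into one kernel-verified Lean document; each statement's English description precedes it below -/
import Mathlib

section
/- For complex numbers m₁, …, m_n (n ≥ 1), a variable t, and complex parameters x, y such that all expressions below are defined, P_n(m₁−xt, m₂,…,m_{n−1}, m_n−yt) + (−1)^n P_n(m_n−yt, m_{n−1},…,m₂, m₁−xt) = Σ_{j₁,j₂≥1, j₁+j₂=n} (−1)^{j₂−1} P_{j₁}(m₁−xt, m₂,…,m_{j₁}) · P_{j₂}(m_n−yt, m_{n−1},…,m_{j₁+1}). -/
/-!
Extend the tuple to a sequence `a` on `ℕ` and put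
`F(i, l) = ∏_{i ≤ p < l} (a_p + ⋯ + a_{l-1})⁻¹`, `G(l, j) = ∏_{l ≤ p < j} (a_l + ⋯ + a_p)⁻¹`.
Then `P` of an initial segment of length `l` is `F(0, l)` and `P` of the reversed final segment
starting at `l` is `G(l, n)`, and the identity is a rearrangement of
`∑_{l=0}^{n} (-1)^l F(0, l) G(l, n) = 0`.
For `T(i, j) = ∑_{l=i}^{j} (-1)^l F(i, l) G(l, j)`, the partial fraction
`(A + B)/(A B) = 1/A + 1/B` applied termwise gives
`(a_i + ⋯ + a_j) T(i, j + 1) = T(i, j) + T(i + 1, j + 1)`, and since `T(i, i) = (-1)^i`,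
induction on `j - i` shows `T(i, j) = 0` whenever `i < j`.
-/

open scoped BigOperators

/-- `P (m₁, …, mₙ) = Π_{i=1}^{n} 1/(mᵢ + m_{i+1} + ⋯ + mₙ)`; the empty product
(`n = 0`) is `1`. -/
noncomputable def P {n : ℕ} (m : Fin n → ℂ) : ℂ :=
  ∏ i, (∑ j ∈ Finset.Ici i, m j)⁻¹

open Finset

section Segments

variable {K : Type*} [Field K] (a : ℕ → K)

def invSuffixProd (i j : ℕ) : K :=
  ∏ p ∈ Ico i j, (∑ q ∈ Ico p j, a q)⁻¹

def invPrefixProd (i j : ℕ) : K :=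
  ∏ p ∈ Ico i j, (∑ q ∈ Ico i (p + 1), a q)⁻¹

def altSum (i j : ℕ) : K :=
  ∑ l ∈ Icc i j, (-1) ^ l * (invSuffixProd a i l * invPrefixProd a l j)

@[simp]
theorem invSuffixProd_self (i : ℕ) : invSuffixProd a i i = 1 := by
  simp [invSuffixProd]

@[simp]
theorem invPrefixProd_self (i : ℕ) : invPrefixProd a i i = 1 := by
  simp [invPrefixProd]

@[simp]
theorem altSum_self (i : ℕ) : altSum a i i = (-1) ^ i := by
  simp [altSum]

theorem invSuffixProd_eq_inv_mul {i j : ℕ} (h : i < j) :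
    invSuffixProd a i j = (∑ q ∈ Ico i j, a q)⁻¹ * invSuffixProd a (i + 1) j :=
  prod_eq_prod_Ico_succ_bot h _

theorem invPrefixProd_succ {i j : ℕ} (h : i ≤ j) :
    invPrefixProd a i (j + 1) = invPrefixProd a i j * (∑ q ∈ Ico i (j + 1), a q)⁻¹ :=
  prod_Ico_succ_top h _

theorem invPrefixProd_eq_invSuffixProd_reflect {l n : ℕ} (hln : l ≤ n) :
    invPrefixProd a l n = invSuffixProd (fun q => a (n - 1 - q)) 0 (n - l) := by
  rcases Nat.eq_zero_or_pos n with rfl | hn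
  · simp [Nat.le_zero.mp hln]
  have inner : ∀ p ∈ Ico 0 (n - l),
      ∑ q ∈ Ico p (n - l), a (n - 1 - q) = ∑ q ∈ Ico l (n - 1 - p + 1), a q := by
    intro p hp
    rw [sum_Ico_reflect a p (by omega), show n - 1 + 1 - (n - l) = l by omega,
      show n - 1 + 1 - p = n - 1 - p + 1 by simp at hp; omega]
  rw [invSuffixProd, prod_congr rfl fun p hp => by rw [inner p hp],
    prod_Ico_reflect (fun r => (∑ q ∈ Ico l (r + 1), a q)⁻¹) 0 (by omega : n - l ≤ n - 1 + 1),
    show n - 1 + 1 - (n - l) = l by omega, show n - 1 + 1 - 0 = n by omega]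
  rfl

variable {a}

/-- With `A = aᵢ + ⋯ + a_{l-1}` and `B = a_l + ⋯ + a_j` this is `(A + B)/(A B) = 1/A + 1/B`;
at `l = i` (resp. `l = j + 1`) the sum `A` (resp. `B`) is empty and only one term survives. -/
theorem sum_mul_invSuffixProd_mul_invPrefixProd {i j l : ℕ} (hij : i ≤ j) (hil : i ≤ l)
    (hlj : l ≤ j + 1) (ha : ∀ p q, i ≤ p → p < q → q ≤ j + 1 → ∑ x ∈ Ico p q, a x ≠ 0) :
    (∑ q ∈ Ico i (j + 1), a q) * (invSuffixProd a i l * invPrefixProd a l (j + 1)) =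
      (if l ≤ j then invSuffixProd a i l * invPrefixProd a l j else 0) +
        (if i < l then invSuffixProd a (i + 1) l * invPrefixProd a l (j + 1) else 0) := by
  have hS := ha i (j + 1) le_rfl (by omega) le_rfl
  rcases hil.eq_or_lt with rfl | hil
  · rw [if_pos hij, if_neg (lt_irrefl _), invPrefixProd_succ a hij]
    field_simp
    simp
  rcases hlj.eq_or_lt with rfl | hlj
  · rw [if_neg (by omega), if_pos hil, invSuffixProd_eq_inv_mul a hil]
    field_simp
    simp
  have hA : ∑ q ∈ Ico i l, a q ≠ 0 := ha i l le_rfl hil (by omega)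
  have hB : ∑ q ∈ Ico l (j + 1), a q ≠ 0 := ha l (j + 1) hil.le (by omega) le_rfl
  rw [if_pos (by omega), if_pos hil, ← sum_Ico_consecutive a hil.le hlj.le,
    invSuffixProd_eq_inv_mul a hil, invPrefixProd_succ a (by omega : l ≤ j)]
  field_simp
  ring

theorem sum_mul_altSum_succ {i j : ℕ} (hij : i ≤ j)
    (ha : ∀ p q, i ≤ p → p < q → q ≤ j + 1 → ∑ x ∈ Ico p q, a x ≠ 0) :
    (∑ q ∈ Ico i (j + 1), a q) * altSum a i (j + 1) = altSum a i j + altSum a (i + 1) (j + 1) := by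
  have hleft : (Icc i (j + 1)).filter (· ≤ j) = Icc i j := by ext; simp; omega
  have hright : (Icc i (j + 1)).filter (i < ·) = Icc (i + 1) (j + 1) := by ext; simp; omega
  rw [altSum, mul_sum, altSum, altSum, ← hleft, ← hright, sum_filter, sum_filter, ← sum_add_distrib]
  refine sum_congr rfl fun l hl => ?_
  rw [mem_Icc] at hl
  rw [mul_left_comm, sum_mul_invSuffixProd_mul_invPrefixProd hij hl.1 hl.2 ha]
  split_ifs <;> ring

theorem altSum_eq_zero {i j : ℕ} (hij : i < j)
    (ha : ∀ p q, i ≤ p → p < q → q ≤ j → ∑ x ∈ Ico p q, a x ≠ 0) : altSum a i j = 0 := by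
  obtain ⟨d, rfl⟩ := Nat.exists_eq_add_of_lt hij
  induction d generalizing i with
  | zero =>
    have h := sum_mul_altSum_succ le_rfl ha
    rw [altSum_self, altSum_self, pow_succ, mul_neg_one, add_neg_cancel] at h
    exact (mul_eq_zero.mp h).resolve_left (ha i (i + 1) le_rfl (by omega) le_rfl)
  | succ d ih =>
    have h := sum_mul_altSum_succ (by omega) ha
    have h₁ : altSum a i (i + (d + 1)) = 0 :=
      ih (by omega) fun p q hp hpq hq => ha p q hp hpq (by omega)
    have h₂ : altSum a (i + 1) (i + (d + 1) + 1) = 0 := by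
      rw [show i + (d + 1) + 1 = i + 1 + d + 1 by omega]
      exact ih (by omega) fun p q hp hpq hq => ha p q (by omega) hpq (by omega)
    rw [h₁, h₂, add_zero] at h
    exact (mul_eq_zero.mp h).resolve_left (ha i _ le_rfl (by omega) (by omega))

theorem neg_one_pow_sub_of_le {R : Type*} [CommRing R] {k l : ℕ} (h : l ≤ k) :
    (-1 : R) ^ (k - l) = (-1) ^ k * (-1) ^ l := by
  obtain ⟨d, rfl⟩ := Nat.exists_eq_add_of_le h
  rw [Nat.add_sub_cancel_left, pow_add, mul_right_comm, ← pow_add, ← two_mul, pow_mul]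
  simp

theorem invSuffixProd_add_neg_one_pow_mul_invPrefixProd {n : ℕ} (hn : 1 ≤ n)
    (ha : ∀ p q, p < q → q ≤ n → ∑ x ∈ Ico p q, a x ≠ 0) :
    invSuffixProd a 0 n + (-1) ^ n * invPrefixProd a 0 n =
      ∑ l ∈ range (n - 1),
        (-1) ^ (n - (l + 1) - 1) * invSuffixProd a 0 (l + 1) * invPrefixProd a (l + 1) n := by
  have h := altSum_eq_zero hn fun p q _ => ha p q
  obtain ⟨k, rfl⟩ := Nat.exists_eq_add_of_le' hn
  rw [altSum, ← Nat.range_succ_eq_Icc_zero, sum_range_succ, sum_range_succ'] at h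
  simp only [invSuffixProd_self, invPrefixProd_self, pow_zero, one_mul, mul_one] at h
  have hsign : ∀ l ∈ range k, (-1 : K) ^ (k + 1 - (l + 1) - 1) = (-1) ^ k * (-1) ^ (l + 1) :=
    fun l hl => by
      rw [show k + 1 - (l + 1) - 1 = k - (l + 1) by omega,
        neg_one_pow_sub_of_le (by simp at hl; omega)]
  rw [Nat.add_sub_cancel, sum_congr rfl fun l hl => by rw [hsign l hl]]
  simp only [mul_assoc]
  rw [← mul_sum]
  linear_combination (-(-1) ^ k) * h
    - invSuffixProd a 0 (k + 1) * (even_two_mul k).neg_one_pow (α := K)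

end Segments

theorem sum_Ico_ne_zero_of_sum_Icc_ne_zero {M : Type*} [AddCommMonoid M] {n : ℕ} {f : Fin n → M}
    {a : ℕ → M} (hf : ∀ i, f i = a i) (h : ∀ i j : Fin n, i ≤ j → ∑ k ∈ Icc i j, f k ≠ 0)
    {p q : ℕ} (hpq : p < q) (hq : q ≤ n) : ∑ x ∈ Ico p q, a x ≠ 0 := by
  obtain ⟨r, rfl⟩ := Nat.exists_eq_add_of_lt hpq
  have hfa := h ⟨p, by omega⟩ ⟨p + r, by omega⟩ (Fin.mk_le_mk.mpr (by omega))
  simp only [hf] at hfa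
  rwa [Ico_add_one_right_eq_Icc,
    ← Fin.map_valEmbedding_Icc (⟨p, by omega⟩ : Fin n) ⟨p + r, by omega⟩, sum_map]

theorem P_eq_invSuffixProd {k : ℕ} (f : Fin k → ℂ) (a : ℕ → ℂ) (hf : ∀ i, f i = a i) :
    P f = invSuffixProd a 0 k := by
  have hsum : ∀ i : Fin k, ∑ j ∈ Ici i, f j = ∑ q ∈ Ico (i : ℕ) k, a q := fun i => by
    rw [← Fin.map_valEmbedding_Ici, sum_map]
    exact sum_congr rfl fun j _ => hf j
  simp only [P, hsum]
  rw [Fin.prod_univ_eq_prod_range (fun p => (∑ q ∈ Ico p k, a q)⁻¹), range_eq_Ico]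
  rfl

theorem P_eq_invPrefixProd {k l n : ℕ} (f : Fin k → ℂ) (a : ℕ → ℂ) (hkl : l + k = n)
    (hf : ∀ i : Fin k, f i = a (n - 1 - i)) : P f = invPrefixProd a l n := by
  rw [P_eq_invSuffixProd f (fun q => a (n - 1 - q)) hf,
    invPrefixProd_eq_invSuffixProd_reflect a (by omega), show n - l = k by omega]

/-- Identity (2.1) of Machide: with `m'` the tuple `(m₁ - xt, m₂, …, m_{n-1}, mₙ - yt)`,
`P_n(m') + (-1)^n P_n(reverse m')
  = Σ_{j₁,j₂ ≥ 1, j₁+j₂ = n} (-1)^(j₂-1) P_{j₁}(first j₁ entries of m')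
      P_{j₂}(last j₂ entries of m', reversed)`,
asserted for `n ≥ 2`, under the hypothesis that all interval sums of `m'` are
nonzero (so that all expressions are defined).  The index `j : Fin (n-1)`
encodes `j₁ = j + 1` (and `j₂ = n - j₁`). -/
theorem partial_fraction_shifted (n : ℕ) (hn : 2 ≤ n) (m' : Fin n → ℂ)
    (h : ∀ i j : Fin n, i ≤ j → ∑ k ∈ Finset.Icc i j, m' k ≠ 0) :
    P m' + (-1 : ℂ) ^ n * P (fun i : Fin n => m' ⟨n - 1 - i.val, by omega⟩)
      = ∑ j : Fin (n - 1), (-1 : ℂ) ^ (n - (j.val + 1) - 1)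
          * P (fun i : Fin (j.val + 1) =>
              m' ⟨i.val, by have := i.isLt; have := j.isLt; omega⟩)
          * P (fun i : Fin (n - (j.val + 1)) => m' ⟨n - 1 - i.val, by omega⟩) := by
  set a : ℕ → ℂ := fun l => if hl : l < n then m' ⟨l, hl⟩ else 0
  have ha : ∀ i : Fin n, m' i = a i := fun i => by simp [a]
  rw [P_eq_invSuffixProd m' a ha, P_eq_invPrefixProd (l := 0) _ a (zero_add n) fun i => ha _,
    invSuffixProd_add_neg_one_pow_mul_invPrefixProd (by omega)
      fun _ _ => sum_Ico_ne_zero_of_sum_Icc_ne_zero ha h,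
    ← Fin.sum_univ_eq_sum_range]
  refine sum_congr rfl fun j _ => ?_
  congr 2 <;> symm
  · exact P_eq_invSuffixProd _ a fun i => ha _
  · exact P_eq_invPrefixProd _ a (by omega) fun i => ha _
end

section
/- Let l, n be integers with l ≥ 5 and n ≥ 3, and let Ψ be the differential operator Ψ(f) = (∂²f/∂y² − ∂²f/∂x∂y) evaluated at x = y = 1, acting on smooth functions f(x,y) of two real (or complex) variables. Then: (a) Ψ( (y−x)^n ( G_l^n(x+y,y) + (−1)^n G_l^n(y+x,x) ) ) = 0; (b) Ψ( (y−x)² ( G_l^4(x+y,y) + G_l^4(y+x,x) ) ) = 8 G_l^4(2,1); (c) Ψ( (y−x) ( G_l^3(x+y,y) − G_l^3(y+x,x) ) ) = 4 ∂G_l^3/∂y (2,1); (d) Ψ( G_l^2(x+y,y) + G_l^2(y+x,x) ) = ∂²G_l^2/∂y² (2,1). -/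
open scoped BigOperators

/-- The multiple zeta value `ζ(l₁, …, lₙ)`, as a sum over strictly decreasing
tuples of positive integers. -/
noncomputable def mzv {n : ℕ} (l : Fin n → ℕ) : ℝ :=
  ∑' m : {m : Fin n → ℕ // StrictAnti m ∧ ∀ i, 0 < m i},
    ∏ i, ((m.1 i : ℝ) ^ (l i))⁻¹

/-- The Riemann zeta value `ζ(k)`. -/
noncomputable def rz (k : ℕ) : ℝ := ∑' m : ℕ+, ((m : ℝ) ^ k)⁻¹

/-- The weighted sum with two parameters
`G_l^n(x,y) = Σ_{l₁≥2, l₂,…,lₙ≥1, l₁+⋯+lₙ=l} x^(l₁-1) y^(l-l₁-(n-1)) ζ(l₁,…,lₙ)`. -/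
noncomputable def G (l n : ℕ) (x y : ℂ) : ℂ :=
  match n with
  | 0 => 0
  | k + 1 =>
    ∑ c ∈ (Finset.Nat.antidiagonalTuple (k + 1) l).filter
        (fun c => 2 ≤ c 0 ∧ ∀ i, 1 ≤ c i),
      x ^ (c 0 - 1) * y ^ (l - c 0 - k) * (mzv c : ℂ)

/-- The differential operator `Ψ(f) = (∂²f/∂y² - ∂²f/∂x∂y)` evaluated at `x = y = 1`. -/
noncomputable def Psi (f : ℂ → ℂ → ℂ) : ℂ :=
  deriv (deriv (f 1)) 1 - deriv (fun x => deriv (f x) 1) 1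

/-! Each expression has the form `Ψ(uᵏ H)` with `u = y - x` and
`H(x, y) = g(x + y, y) + s g(y + x, x)` for a polynomial `g`. By Leibniz' rule, at `x = y = 1`
(where `u = 0`),
`Ψ(uᵏ H) = 2k(k-1) u^(k-2) H + k u^(k-1) (3 H_y - H_x) + uᵏ (H_yy - H_xy)`,
so only `k ≤ 2` contributes, and the derivatives of `H` at `(1, 1)` are those of `g` at `(2, 1)`.
The four identities therefore hold for every smooth `g`, in particular for `g = G_l^n`. -/

/-- `D a b` plays the role of `∂ₓᵃ ∂ᵧᵇ (D 0 0)`: along every differentiable curve each member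
obeys the chain rule with the next members as its partial derivatives. -/
def IsPartialDerivFamily (D : ℕ → ℕ → ℂ → ℂ → ℂ) : Prop :=
  ∀ (a b : ℕ) {u v : ℂ → ℂ} {u' v' t : ℂ}, HasDerivAt u u' t → HasDerivAt v v' t →
    HasDerivAt (fun s => D a b (u s) (v s))
      (u' * D (a + 1) b (u t) (v t) + v' * D a (b + 1) (u t) (v t)) t

theorem Psi_eq_of_hasDerivAt {f fy : ℂ → ℂ → ℂ} {a b : ℂ}
    (hf : ∀ x y, HasDerivAt (f x) (fy x y) y)
    (ha : HasDerivAt (fy 1) a 1) (hb : HasDerivAt (fun x => fy x 1) b 1) : Psi f = a - b := by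
  have hfy : deriv (f 1) = fy 1 := funext fun y => (hf 1 y).deriv
  have hfy' : (fun x => deriv (f x) 1) = fun x => fy x 1 := funext fun x => (hf x 1).deriv
  rw [Psi, hfy, hfy', ha.deriv, hb.deriv]

namespace IsPartialDerivFamily

variable {D : ℕ → ℕ → ℂ → ℂ → ℂ}

theorem const_mul (hD : IsPartialDerivFamily D) (c : ℂ) :
    IsPartialDerivFamily fun a b x y => c * D a b x y := fun a b _ _ _ _ _ hu hv =>
  ((hD a b hu hv).const_mul c).congr_deriv (by ring)

theorem sum {ι : Type*} (s : Finset ι) {D : ι → ℕ → ℕ → ℂ → ℂ → ℂ}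
    (hD : ∀ i ∈ s, IsPartialDerivFamily (D i)) :
    IsPartialDerivFamily fun a b x y => ∑ i ∈ s, D i a b x y := fun a b _ _ _ _ _ hu hv => by
  simpa only [Finset.mul_sum, ← Finset.sum_add_distrib] using
    HasDerivAt.fun_sum fun i hi => hD i hi a b hu hv

theorem hasDerivAt_add_left (hD : IsPartialDerivFamily D) (a b : ℕ) (x y : ℂ) :
    HasDerivAt (fun y => D a b (x + y) y) (D (a + 1) b (x + y) y + D a (b + 1) (x + y) y) y := by
  simpa using hD a b ((hasDerivAt_id y).const_add x) (hasDerivAt_id y)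

theorem hasDerivAt_add_right (hD : IsPartialDerivFamily D) (a b : ℕ) (x y : ℂ) :
    HasDerivAt (fun y => D a b (y + x) x) (D (a + 1) b (y + x) x) y := by
  simpa using hD a b ((hasDerivAt_id y).add_const x) (hasDerivAt_const y x)

theorem deriv_snd (hD : IsPartialDerivFamily D) (a b : ℕ) (x : ℂ) :
    deriv (D a b x) = D a (b + 1) x :=
  funext fun y => by simpa using (hD a b (hasDerivAt_const y x) (hasDerivAt_id y)).deriv

theorem Psi_sub_pow_mul (hD : IsPartialDerivFamily D) (k : ℕ) (s : ℂ) :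
    Psi (fun x y => (y - x) ^ k * (D 0 0 (x + y) y + s * D 0 0 (y + x) x)) =
      2 * k * (k - 1 : ℕ) * 0 ^ (k - 2) * ((1 + s) * D 0 0 2 1)
      + k * 0 ^ (k - 1) * ((2 + 2 * s) * D 1 0 2 1 + (3 - s) * D 0 1 2 1)
      + 0 ^ k * ((1 - s) * D 1 1 2 1 + D 0 2 2 1) := by
  have hf : ∀ x y, HasDerivAt (fun y => (y - x) ^ k * (D 0 0 (x + y) y + s * D 0 0 (y + x) x))
      (k * (y - x) ^ (k - 1) * (D 0 0 (x + y) y + s * D 0 0 (y + x) x)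
        + (y - x) ^ k * (D 1 0 (x + y) y + D 0 1 (x + y) y + s * D 1 0 (y + x) x)) y :=
    fun x y => ((((hasDerivAt_id' y).sub_const x).fun_pow k).fun_mul
      ((hD.hasDerivAt_add_left 0 0 x y).fun_add
        ((hD.hasDerivAt_add_right 0 0 x y).const_mul s))).congr_deriv (by ring)
  have hyy :=
    ((((hasDerivAt_id' (1 : ℂ)).sub_const 1).fun_pow (k - 1)).const_mul (k : ℂ)).fun_mul
      ((hD.hasDerivAt_add_left 0 0 1 1).fun_add ((hD.hasDerivAt_add_right 0 0 1 1).const_mul s))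
    |>.fun_add <| (((hasDerivAt_id' (1 : ℂ)).sub_const 1).fun_pow k).fun_mul
      (((hD.hasDerivAt_add_left 1 0 1 1).fun_add (hD.hasDerivAt_add_left 0 1 1 1)).fun_add
        ((hD.hasDerivAt_add_right 1 0 1 1).const_mul s))
  have hxy :=
    ((((hasDerivAt_id' (1 : ℂ)).const_sub 1).fun_pow (k - 1)).const_mul (k : ℂ)).fun_mul
      ((hD.hasDerivAt_add_right 0 0 1 1).fun_add ((hD.hasDerivAt_add_left 0 0 1 1).const_mul s))
    |>.fun_add <| (((hasDerivAt_id' (1 : ℂ)).const_sub 1).fun_pow k).fun_mul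
      (((hD.hasDerivAt_add_right 1 0 1 1).fun_add (hD.hasDerivAt_add_right 0 1 1 1)).fun_add
        ((hD.hasDerivAt_add_left 1 0 1 1).const_mul s))
  rw [Psi_eq_of_hasDerivAt hf hyy hxy]
  simp only [sub_self, one_add_one_eq_two, Nat.sub_sub]
  ring

theorem Psi_sub_pow_mul_eq_zero (hD : IsPartialDerivFamily D) {k : ℕ} (hk : 3 ≤ k) (s : ℂ) :
    Psi (fun x y => (y - x) ^ k * (D 0 0 (x + y) y + s * D 0 0 (y + x) x)) = 0 := by
  rw [hD.Psi_sub_pow_mul]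
  simp [zero_pow (show k - 2 ≠ 0 by omega), zero_pow (show k - 1 ≠ 0 by omega),
    zero_pow (show k ≠ 0 by omega)]

theorem Psi_sub_sq_mul_add (hD : IsPartialDerivFamily D) :
    Psi (fun x y => (y - x) ^ 2 * (D 0 0 (x + y) y + D 0 0 (y + x) x)) = 8 * D 0 0 2 1 := by
  have h := hD.Psi_sub_pow_mul 2 1
  simp only [one_mul] at h
  rw [h]
  norm_num
  ring

theorem Psi_sub_mul_sub (hD : IsPartialDerivFamily D) :
    Psi (fun x y => (y - x) * (D 0 0 (x + y) y - D 0 0 (y + x) x)) = 4 * D 0 1 2 1 := by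
  have h := hD.Psi_sub_pow_mul 1 (-1)
  simp only [pow_one, neg_one_mul, ← sub_eq_add_neg] at h
  rw [h]
  norm_num

theorem Psi_add (hD : IsPartialDerivFamily D) :
    Psi (fun x y => D 0 0 (x + y) y + D 0 0 (y + x) x) = D 0 2 2 1 := by
  have h := hD.Psi_sub_pow_mul 0 1
  simp only [pow_zero, one_mul] at h
  rw [h]
  norm_num

end IsPartialDerivFamily

def monomialDeriv (p q a b : ℕ) (x y : ℂ) : ℂ :=
  (p.descFactorial a * q.descFactorial b : ℂ) * x ^ (p - a) * y ^ (q - b)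

theorem isPartialDerivFamily_monomialDeriv (p q : ℕ) :
    IsPartialDerivFamily (monomialDeriv p q) := fun a b _ _ _ _ _ hu hv => by
  refine (((hu.fun_pow (p - a)).const_mul _).fun_mul (hv.fun_pow (q - b))).congr_deriv ?_
  simp only [monomialDeriv, Nat.descFactorial_succ, ← Nat.sub_sub]
  push_cast
  ring

noncomputable def GDeriv (l n a b : ℕ) (x y : ℂ) : ℂ :=
  match n with
  | 0 => 0
  | k + 1 =>
    ∑ c ∈ (Finset.Nat.antidiagonalTuple (k + 1) l).filter (fun c => 2 ≤ c 0 ∧ ∀ i, 1 ≤ c i),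
      (mzv c : ℂ) * monomialDeriv (c 0 - 1) (l - c 0 - k) a b x y

theorem GDeriv_zero_zero (l n : ℕ) : GDeriv l n 0 0 = G l n := by
  funext x y
  cases n with
  | zero => rfl
  | succ k =>
    refine Finset.sum_congr rfl fun c _ => ?_
    simp only [monomialDeriv, Nat.descFactorial_zero, Nat.sub_zero]
    push_cast
    ring

theorem isPartialDerivFamily_GDeriv (l n : ℕ) : IsPartialDerivFamily (GDeriv l n) := by
  cases n with
  | zero => exact fun a b _ _ _ _ t _ _ => by simpa [GDeriv] using hasDerivAt_const t (0 : ℂ)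
  | succ k =>
    exact IsPartialDerivFamily.sum _ fun c _ =>
      (isPartialDerivFamily_monomialDeriv _ _).const_mul _

theorem Psi_weighted_sums_general (l n : ℕ) (hn : 3 ≤ n) :
    Psi (fun x y => (y - x) ^ n
          * (G l n (x + y) y + (-1 : ℂ) ^ n * G l n (y + x) x)) = 0
    ∧ Psi (fun x y => (y - x) ^ 2
          * (G l 4 (x + y) y + G l 4 (y + x) x)) = 8 * G l 4 2 1
    ∧ Psi (fun x y => (y - x)
          * (G l 3 (x + y) y - G l 3 (y + x) x))
        = 4 * deriv (fun y => G l 3 2 y) 1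
    ∧ Psi (fun x y => G l 2 (x + y) y + G l 2 (y + x) x)
        = deriv (deriv (fun y => G l 2 2 y)) 1 := by
  simp only [← GDeriv_zero_zero]
  have hG := isPartialDerivFamily_GDeriv l
  refine ⟨(hG n).Psi_sub_pow_mul_eq_zero hn _, (hG 4).Psi_sub_sq_mul_add, ?_, ?_⟩
  · rw [(hG 3).Psi_sub_mul_sub, (hG 3).deriv_snd]
  · rw [(hG 2).Psi_add, (hG 2).deriv_snd, (hG 2).deriv_snd]

/-- Lemma 4.1 (i) of Machide: values of `Ψ` on weighted sums of multiple zeta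
values, for integers `l ≥ 5` and `n ≥ 3`.  The partial derivatives of
`G_l^n` (a polynomial in `x, y`) are expressed via `deriv`. -/
theorem Psi_weighted_sums (l n : ℕ) (hl : 5 ≤ l) (hn : 3 ≤ n) :
    Psi (fun x y => (y - x) ^ n
          * (G l n (x + y) y + (-1 : ℂ) ^ n * G l n (y + x) x)) = 0
    ∧ Psi (fun x y => (y - x) ^ 2
          * (G l 4 (x + y) y + G l 4 (y + x) x)) = 8 * G l 4 2 1
    ∧ Psi (fun x y => (y - x)
          * (G l 3 (x + y) y - G l 3 (y + x) x))
        = 4 * deriv (fun y => G l 3 2 y) 1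
    ∧ Psi (fun x y => G l 2 (x + y) y + G l 2 (y + x) x)
        = deriv (deriv (fun y => G l 2 2 y)) 1 :=
  Psi_weighted_sums_general l n hn
end

section
/- For any integer l ≥ 3, one has Σ_{j=2}^{l−1} 2^j ζ(j, l−j) = (l+1) ζ(l) (the weighted Euler sum formula). -/
/-!
Index the pairs `m > n ≥ 1` by `(a, b) ∈ ℕ × ℕ` via `m = a + b + 2`, `n = b + 1`, so that
`m - 2n = a - b`. For a fixed pair the sum over `j` is a finite geometric series in `2n / m`:
on the diagonal `m = 2n` it equals `(l - 2) / n ^ l`, and off it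
`4 / (m (m - 2n) n ^ (l - 2)) - 2 ^ l / (m ^ (l - 1) (m - 2n))`.
Summed over all pairs, the diagonal gives `(l - 2) ζ(l)`; the first off-diagonal term, summed
over `m` by partial fractions and telescoping, gives `3 / (4 n ^ 2)` for each `n`, hence `3 ζ(l)`;
the second is antisymmetric under `a ↔ b` and sums to `0`. All pieces converge absolutely, by
comparison with `((a + 1) (b + 1)) ^ (-3/2)` and `((b + 1) |a - b|) ^ (-3/2)`.
-/

open scoped BigOperators

open Finset Filter Topology

lemma tsum_eq_zero_of_swap_eq_neg {α G : Type*} [AddCommGroup G] [TopologicalSpace G]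
    [IsTopologicalAddGroup G] [T2Space G] [IsAddTorsionFree G] {f : α × α → G}
    (hf : ∀ p, f p.swap = -f p) : ∑' p, f p = 0 := by
  rw [← self_eq_neg, ← tsum_neg, ← (Equiv.prodComm α α).tsum_eq f]
  exact tsum_congr hf

lemma sum_range_eq_zero_of_reflect_eq_neg {G : Type*} [AddCommGroup G] [IsAddTorsionFree G]
    {f : ℕ → G} {n : ℕ} (hf : ∀ j < n, f (n - 1 - j) = -f j) :
    ∑ j ∈ range n, f j = 0 := by
  rw [← self_eq_neg, ← sum_neg_distrib, ← sum_range_reflect]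
  exact sum_congr rfl fun j hj => hf j (mem_range.1 hj)

lemma support_ite_eq_diag_subset {α M : Type*} [DecidableEq α] [AddCommMonoid M] (f : α → M) :
    Function.support (fun p : α × α => if p.1 = p.2 then f p.2 else 0)
      ⊆ Set.range Function.diag := by
  rintro ⟨a, b⟩ h
  obtain rfl : a = b := by by_contra hab; simp [hab] at h
  exact ⟨a, rfl⟩

lemma summable_ite_eq_diag {α M : Type*} [DecidableEq α] [AddCommMonoid M] [TopologicalSpace M]
    {f : α → M} (hf : Summable f) :
    Summable fun p : α × α => if p.1 = p.2 then f p.2 else 0 := by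
  refine (Function.diag_injective.summable_iff fun p hp =>
    Function.notMem_support.1 fun h => hp (support_ite_eq_diag_subset f h)).1 ?_
  simpa [Function.comp_def] using hf

lemma tsum_ite_eq_diag {α M : Type*} [DecidableEq α] [AddCommMonoid M] [TopologicalSpace M]
    (f : α → M) : ∑' p : α × α, (if p.1 = p.2 then f p.2 else 0) = ∑' a, f a := by
  rw [← Function.diag_injective.tsum_eq (support_ite_eq_diag_subset f)]
  simp

lemma Summable.tsum_sub_nat_add {G : Type*} [AddCommGroup G] [TopologicalSpace G]
    [IsTopologicalAddGroup G] [T2Space G] {u : ℕ → G} {k : ℕ}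
    (hs : Summable fun a => u a - u (a + k)) (hu : Tendsto u atTop (𝓝 0)) :
    ∑' a, (u a - u (a + k)) = ∑ a ∈ range k, u a := by
  have partial_sum (M : ℕ) : ∑ a ∈ range M, (u a - u (a + k))
      = ∑ a ∈ range k, u a - ∑ a ∈ range k, u (M + a) := by
    have h := (sum_range_add u M k).symm.trans (add_comm M k ▸ sum_range_add u k M)
    simp only [sum_sub_distrib, add_comm _ k]
    rw [eq_sub_iff_add_eq, sub_add_eq_add_sub, h, add_sub_cancel_right]
  have htail : Tendsto (fun M => ∑ a ∈ range k, u (M + a)) atTop (𝓝 0) := by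
    simpa using tendsto_finsetSum (range k) fun a _ => hu.comp (tendsto_add_atTop_nat a)
  refine (hs.hasSum_iff_tendsto_nat.2 ?_).tsum_eq
  simpa [partial_sum] using (tendsto_const_nhds (x := ∑ a ∈ range k, u a)).sub htail

lemma mul_rpow_three_halves_le {x y z : ℝ} (hx : 0 ≤ x) (hy : 0 ≤ y) (hxz : x ≤ z)
    (hyz : y ≤ z) : x ^ (3 / 2 : ℝ) * y ^ (3 / 2 : ℝ) ≤ z * (x * y) := by
  have hsqrt : √(x * y) ≤ z := Real.sqrt_le_iff.2 ⟨hx.trans hxz, by nlinarith⟩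
  have h32 : ∀ t : ℝ, 0 ≤ t → t ^ (3 / 2 : ℝ) = t * √t := fun t ht => by
    rw [Real.sqrt_eq_rpow, ← Real.rpow_one_add' ht (by norm_num)]; norm_num
  rw [← Real.mul_rpow hx hy, h32 _ (mul_nonneg hx hy), mul_comm z]
  exact mul_le_mul_of_nonneg_left hsqrt (mul_nonneg hx hy)

/-- At `m = 2 * n` the last two terms are divisions by zero, hence `0`. -/
lemma sum_two_pow_div_pow_mul_pow {m n : ℝ} (hm : m ≠ 0) (hn : n ≠ 0) {l : ℕ}
    (hl : 2 ≤ l) :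
    ∑ j ∈ Ico 2 l, 2 ^ j / (m ^ j * n ^ (l - j))
      = (if m = 2 * n then ((l : ℝ) - 2) / n ^ l else 0)
        + 4 / (m * (m - 2 * n) * n ^ (l - 2)) - 2 ^ l / (m ^ (l - 1) * (m - 2 * n)) := by
  have hterm : ∀ j ∈ Ico 2 l, 2 ^ j / (m ^ j * n ^ (l - j)) = (2 * n / m) ^ j / n ^ l := by
    intro j hj
    rw [← pow_sub_mul_pow n (mem_Ico.1 hj).2.le, div_pow, mul_pow]
    field_simp
  rw [sum_congr rfl hterm, ← sum_div]
  by_cases hdiag : m = 2 * n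
  · subst hdiag
    simp [div_self (mul_ne_zero two_ne_zero hn), hl]
  · have hx : 2 * n / m ≠ 1 := fun h => hdiag ((div_eq_one_iff_eq hm).1 h).symm
    have hd : m - 2 * n ≠ 0 := sub_ne_zero.2 hdiag
    rw [if_neg hdiag, zero_add, geom_sum_Ico hx hl]
    obtain ⟨l, rfl⟩ : ∃ l', l = l' + 2 := ⟨l - 2, by omega⟩
    simp only [Nat.add_sub_cancel, show l + 2 - 1 = l + 1 by omega, div_pow]
    field_simp
    ring

def natProdEquivStrictAntiPos :
    ℕ × ℕ ≃ {m : Fin 2 → ℕ // StrictAnti m ∧ ∀ i, 0 < m i} where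
  toFun p := ⟨![p.1 + p.2 + 2, p.2 + 1], by
    refine ⟨fun i j hij => ?_, fun i => by fin_cases i <;> simp⟩
    fin_cases i <;> fin_cases j <;> simp_all⟩
  invFun m := (m.1 0 - m.1 1 - 1, m.1 1 - 1)
  left_inv p := by ext <;> simp; omega
  right_inv := by
    rintro ⟨m, hanti, hpos⟩
    have h10 : m 1 < m 0 := hanti Fin.zero_lt_one
    have h1 : 0 < m 1 := hpos 1
    ext i
    fin_cases i <;> simp <;> omega

lemma mzv_pair (j k : ℕ) :
    mzv ![j, k]
      = ∑' p : ℕ × ℕ, 1 / (((p.1 : ℝ) + p.2 + 2) ^ j * ((p.2 : ℝ) + 1) ^ k) := by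
  rw [mzv, ← natProdEquivStrictAntiPos.tsum_eq]
  refine tsum_congr fun p => ?_
  simp [natProdEquivStrictAntiPos, Fin.prod_univ_two]

lemma rz_eq_tsum_nat (k : ℕ) : rz k = ∑' n : ℕ, 1 / ((n : ℝ) + 1) ^ k := by
  rw [rz, tsum_pnat_eq_tsum_succ (f := fun n => ((n : ℝ) ^ k)⁻¹)]
  simp

lemma summable_inv_succ_rpow_three_halves :
    Summable fun n : ℕ => (((n : ℝ) + 1) ^ (3 / 2 : ℝ))⁻¹ := by
  simpa using (summable_nat_add_iff 1).2
    (Real.summable_nat_rpow_inv.2 (by norm_num : (1 : ℝ) < 3 / 2))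

lemma summable_one_div_pow_mul_pow {j k : ℕ} (hj : 2 ≤ j) (hk : 1 ≤ k) :
    Summable fun p : ℕ × ℕ => 1 / (((p.1 : ℝ) + p.2 + 2) ^ j * ((p.2 : ℝ) + 1) ^ k) := by
  refine Summable.of_norm_bounded
    (summable_inv_succ_rpow_three_halves.mul_of_nonneg summable_inv_succ_rpow_three_halves
      (fun _ => by positivity) (fun _ => by positivity)) fun ⟨a, b⟩ => ?_
  have hm : (1 : ℝ) ≤ a + b + 2 := by norm_cast; omega
  have hn : (1 : ℝ) ≤ b + 1 := by norm_cast; omega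
  rw [Real.norm_of_nonneg (by positivity), one_div, ← mul_inv]
  refine inv_anti₀ (by positivity) ?_
  calc ((a : ℝ) + 1) ^ (3 / 2 : ℝ) * ((b : ℝ) + 1) ^ (3 / 2 : ℝ)
      ≤ ((a : ℝ) + b + 2) * (((a : ℝ) + 1) * ((b : ℝ) + 1)) :=
        mul_rpow_three_halves_le (by positivity) (by positivity) (by linarith) (by linarith)
    _ ≤ ((a : ℝ) + b + 2) ^ 2 * ((b : ℝ) + 1) ^ 1 := by
        rw [pow_two, pow_one, mul_assoc]
        gcongr <;> linarith
    _ ≤ ((a : ℝ) + b + 2) ^ j * ((b : ℝ) + 1) ^ k :=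
        mul_le_mul (pow_le_pow_right₀ hm hj) (pow_le_pow_right₀ hn hk) (by positivity)
          (by positivity)

lemma summable_one_div_mul_sub_mul_pow {c : ℕ} (hc : 1 ≤ c) :
    Summable fun p : ℕ × ℕ =>
      1 / (((p.1 : ℝ) + p.2 + 2) * ((p.1 : ℝ) - p.2) * ((p.2 : ℝ) + 1) ^ c) := by
  have hbound : Summable fun q : ℕ × ℤ =>
      (((q.1 : ℝ) + 1) ^ (3 / 2 : ℝ))⁻¹ * |(q.2 : ℝ)| ^ (-(3 / 2 : ℝ)) :=
    summable_inv_succ_rpow_three_halves.mul_of_nonneg (Real.summable_abs_int_rpow (by norm_num))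
      (fun _ => by positivity) (fun _ => by positivity)
  have hinj : Function.Injective fun p : ℕ × ℕ => (p.2, (p.1 : ℤ) - p.2) := by
    rintro ⟨a, b⟩ ⟨a', b'⟩ h
    simp only [Prod.mk.injEq] at h ⊢
    omega
  refine Summable.of_norm_bounded (hbound.comp_injective hinj) fun ⟨a, b⟩ => ?_
  simp only [Function.comp_apply, Int.cast_sub, Int.cast_natCast]
  rcases eq_or_ne (a : ℝ) b with hab | hab
  · simp [hab]
  have hm : 0 ≤ (a : ℝ) + b + 2 := by positivity
  have hn : (1 : ℝ) ≤ b + 1 := by norm_cast; omega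
  have hd : 0 < |(a : ℝ) - b| := abs_pos.2 (sub_ne_zero.2 hab)
  have hdm : |(a : ℝ) - b| ≤ (a : ℝ) + b + 2 := abs_le.2 ⟨by linarith, by linarith⟩
  rw [Real.rpow_neg hd.le, norm_div, norm_one, norm_mul, norm_mul, norm_pow, Real.norm_eq_abs,
    Real.norm_eq_abs, Real.norm_eq_abs, abs_of_nonneg hm,
    abs_of_nonneg (by linarith : (0 : ℝ) ≤ b + 1), one_div,
    ← mul_inv]
  refine inv_anti₀ (by positivity) ?_
  calc ((b : ℝ) + 1) ^ (3 / 2 : ℝ) * |(a : ℝ) - b| ^ (3 / 2 : ℝ)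
      ≤ ((a : ℝ) + b + 2) * (((b : ℝ) + 1) * |(a : ℝ) - b|) :=
        mul_rpow_three_halves_le (by positivity) hd.le (by linarith) hdm
    _ ≤ ((a : ℝ) + b + 2) * |(a : ℝ) - b| * ((b : ℝ) + 1) ^ c := by
        nlinarith [le_self_pow₀ hn (by omega : c ≠ 0), mul_nonneg hm hd.le]

lemma sum_range_inv_sub_nat (b : ℕ) :
    ∑ a ∈ range (2 * b + 2), ((a : ℝ) - b)⁻¹ = ((b : ℝ) + 1)⁻¹ := by
  have hcancel : ∑ a ∈ range (2 * b + 1), ((a : ℝ) - b)⁻¹ = 0 := by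
    refine sum_range_eq_zero_of_reflect_eq_neg fun a ha => ?_
    rw [Nat.cast_sub (by omega), ← inv_neg]
    push_cast
    ring_nf
  rw [sum_range_succ, hcancel, zero_add]
  push_cast
  ring_nf

lemma hasSum_one_div_mul_sub (b : ℕ) :
    HasSum (fun a : ℕ => 1 / (((a : ℝ) + b + 2) * ((a : ℝ) - b)))
      (3 / (4 * ((b : ℝ) + 1) ^ 2)) := by
  set u : ℕ → ℝ := fun a => ((a : ℝ) - b)⁻¹ with hu_def
  have hu_shift (a : ℕ) : u (a + (2 * b + 2)) = ((a : ℝ) + b + 2)⁻¹ := by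
    simp only [hu_def]; push_cast; ring_nf
  -- Partial fractions in `x = a - b`: `1 / (x (x + 2n)) = (1 / x - 1 / (x + 2n)) / 2n`,
  -- corrected at `x = 0`, where the left side is `1 / 0 = 0`.
  have hsplit : (fun a : ℕ => 1 / (((a : ℝ) + b + 2) * ((a : ℝ) - b))) = fun a =>
      (u a - u (a + (2 * b + 2))) / (2 * (b + 1))
        + if a = b then 1 / (4 * ((b : ℝ) + 1) ^ 2) else 0 := by
    ext a
    rw [hu_shift]
    rcases eq_or_ne a b with rfl | hab
    · simp only [hu_def, sub_self, mul_zero, div_zero, inv_zero, if_true]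
      field_simp
      ring
    · have hd : (a : ℝ) - b ≠ 0 := sub_ne_zero.2 (by exact_mod_cast hab)
      simp only [hu_def, if_neg hab, add_zero]
      field_simp
      ring
  have hsummable : Summable fun a : ℕ => 1 / (((a : ℝ) + b + 2) * ((a : ℝ) - b)) := by
    refine (((summable_one_div_mul_sub_mul_pow le_rfl).prod_symm.prod_factor b).mul_right
      ((b : ℝ) + 1)).congr fun a => ?_
    simp only [Prod.swap_prod_mk]
    field_simp
  have htele : Summable fun a => u a - u (a + (2 * b + 2)) := by
    rw [hsplit] at hsummable
    have := (hsummable.sub (hasSum_ite_eq b (1 / (4 * ((b : ℝ) + 1) ^ 2))).summable).mul_left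
      (2 * ((b : ℝ) + 1))
    refine this.congr fun a => ?_
    field_simp
    ring
  have hu : Tendsto u atTop (𝓝 0) :=
    tendsto_inv_atTop_zero.comp (tendsto_atTop_add_const_right _ _ tendsto_natCast_atTop_atTop)
  have hsum := (htele.hasSum.div_const (2 * ((b : ℝ) + 1))).add
    (hasSum_ite_eq b (1 / (4 * ((b : ℝ) + 1) ^ 2)))
  have hvalue : (∑ a ∈ range (2 * b + 2), u a) / (2 * ((b : ℝ) + 1))
      + 1 / (4 * ((b : ℝ) + 1) ^ 2) = 3 / (4 * ((b : ℝ) + 1) ^ 2) := by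
    rw [sum_range_inv_sub_nat]
    field_simp
    ring
  rwa [htele.tsum_sub_nat_add hu, hvalue, ← hsplit] at hsum

lemma tsum_one_div_mul_sub_mul_pow {c : ℕ} (hc : 1 ≤ c) :
    ∑' p : ℕ × ℕ, 1 / (((p.1 : ℝ) + p.2 + 2) * ((p.1 : ℝ) - p.2) * ((p.2 : ℝ) + 1) ^ c)
      = 3 / 4 * rz (c + 2) := by
  have hs := summable_one_div_mul_sub_mul_pow hc
  have hcol (b : ℕ) :
      ∑' a : ℕ, 1 / (((a : ℝ) + b + 2) * ((a : ℝ) - b) * ((b : ℝ) + 1) ^ c)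
        = 3 / 4 * (1 / ((b : ℝ) + 1) ^ (c + 2)) := by
    have hfactor (a : ℕ) : 1 / (((a : ℝ) + b + 2) * ((a : ℝ) - b) * ((b : ℝ) + 1) ^ c)
        = 1 / (((a : ℝ) + b + 2) * ((a : ℝ) - b)) * (1 / ((b : ℝ) + 1) ^ c) := by
      rw [one_div_mul_one_div]
    rw [tsum_congr hfactor, tsum_mul_right, (hasSum_one_div_mul_sub b).tsum_eq]
    field_simp
    ring
  rw [← (Equiv.prodComm ℕ ℕ).tsum_eq]
  simp only [Equiv.prodComm_apply]
  rw [hs.prod_symm.tsum_prod]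
  simp only [Prod.swap_prod_mk]
  rw [tsum_congr hcol, tsum_mul_left, rz_eq_tsum_nat]

lemma tsum_one_div_pow_mul_sub_eq_zero (c : ℕ) :
    ∑' p : ℕ × ℕ, 1 / (((p.1 : ℝ) + p.2 + 2) ^ c * ((p.1 : ℝ) - p.2)) = 0 := by
  refine tsum_eq_zero_of_swap_eq_neg fun p => ?_
  rw [Prod.fst_swap, Prod.snd_swap, add_comm (p.2 : ℝ), ← neg_sub (p.1 : ℝ), mul_neg, div_neg]

lemma sum_two_pow_mul_one_div_pair {l : ℕ} (hl : 2 ≤ l) (p : ℕ × ℕ) :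
    ∑ j ∈ Ico 2 l, 2 ^ j * (1 / (((p.1 : ℝ) + p.2 + 2) ^ j * ((p.2 : ℝ) + 1) ^ (l - j)))
      = (if p.1 = p.2 then ((l : ℝ) - 2) * (1 / ((p.2 : ℝ) + 1) ^ l) else 0)
        + 4 * (1 / (((p.1 : ℝ) + p.2 + 2) * ((p.1 : ℝ) - p.2) * ((p.2 : ℝ) + 1) ^ (l - 2)))
        - 2 ^ l * (1 / (((p.1 : ℝ) + p.2 + 2) ^ (l - 1) * ((p.1 : ℝ) - p.2))) := by
  have hd : ((p.1 : ℝ) + p.2 + 2) - 2 * ((p.2 : ℝ) + 1) = (p.1 : ℝ) - p.2 := by ring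
  have hdiag : ((p.1 : ℝ) + p.2 + 2) = 2 * ((p.2 : ℝ) + 1) ↔ p.1 = p.2 := by
    rw [← sub_eq_zero, hd, sub_eq_zero, Nat.cast_inj]
  simp only [mul_one_div]
  rw [sum_two_pow_div_pow_mul_pow (by positivity) (by positivity) hl, hd]
  simp only [hdiag]

/-- The weighted Euler sum formula of Ohno–Zudilin: for `l ≥ 3`,
`Σ_{j=2}^{l-1} 2^j ζ(j, l-j) = (l+1) ζ(l)`. -/
theorem weighted_euler_sum (l : ℕ) (hl : 3 ≤ l) :
    ∑ j ∈ Finset.Icc 2 (l - 1), (2 : ℝ) ^ j * mzv ![j, l - j]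
      = ((l : ℝ) + 1) * rz l := by
  have hterm : ∀ j ∈ Ico 2 l, Summable fun p : ℕ × ℕ =>
      (2 : ℝ) ^ j * (1 / (((p.1 : ℝ) + p.2 + 2) ^ j * ((p.2 : ℝ) + 1) ^ (l - j))) :=
    fun j hj => (summable_one_div_pow_mul_pow (mem_Ico.1 hj).1 (by grind)).mul_left _
  have hzeta : Summable fun n : ℕ => 1 / ((n : ℝ) + 1) ^ l := by
    simpa using (summable_nat_add_iff 1).2 (Real.summable_one_div_nat_pow.2 (by omega : 1 < l))
  have hdiag := summable_ite_eq_diag (hzeta.mul_left ((l : ℝ) - 2))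
  have hoff := (summable_one_div_mul_sub_mul_pow (c := l - 2) (by omega)).mul_left 4
  have hanti : Summable fun p : ℕ × ℕ =>
      (2 : ℝ) ^ l * (1 / (((p.1 : ℝ) + p.2 + 2) ^ (l - 1) * ((p.1 : ℝ) - p.2))) :=
    ((hdiag.add hoff).sub (summable_sum hterm)).congr fun p => by
      rw [sum_two_pow_mul_one_div_pair (by omega)]
      ring
  calc ∑ j ∈ Icc 2 (l - 1), (2 : ℝ) ^ j * mzv ![j, l - j]
      = ∑' p : ℕ × ℕ, ∑ j ∈ Ico 2 l,
          (2 : ℝ) ^ j * (1 / (((p.1 : ℝ) + p.2 + 2) ^ j * ((p.2 : ℝ) + 1) ^ (l - j))) := by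
        rw [Summable.tsum_finsetSum hterm, ← Ico_add_one_right_eq_Icc,
          Nat.sub_add_cancel (by omega : 1 ≤ l)]
        simp only [mzv_pair, tsum_mul_left]
    _ = ((l : ℝ) - 2) * rz l + 4 * (3 / 4 * rz l) - 2 ^ l * 0 := by
        rw [tsum_congr (sum_two_pow_mul_one_div_pair (by omega)), Summable.tsum_sub (hdiag.add hoff) hanti,
          Summable.tsum_add hdiag hoff,
          tsum_ite_eq_diag fun b : ℕ => ((l : ℝ) - 2) * (1 / ((b : ℝ) + 1) ^ l),
          tsum_mul_left, tsum_mul_left, tsum_mul_left, tsum_one_div_mul_sub_mul_pow (by omega),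
          tsum_one_div_pow_mul_sub_eq_zero, Nat.sub_add_cancel (by omega), rz_eq_tsum_nat]
    _ = ((l : ℝ) + 1) * rz l := by ring
end
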